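/- Let B be a nonempty barrier of a 3-connected cubic graph G, and let J be an odd component of G − B. Then a vertex v ∈ V(J) is λ-matchable in G if and only if v is λ-matchable in the barrier fragment G/(V(G)∖V(J)) obtained by contracting the complement of V(J) to a single vertex. -/

import Mathlib

open SimpleGraph Set

/-- A graph is cubic (3-regular) if every vertex has exactly 3 neighbours. -/
def IsCubic {V : Type*} (G : SimpleGraph V) : Prop := ∀ v : V, (G.neighborSet v).ncard = 3

/-- `G` is `k`-connected: more than `k` vertices, and deleting fewer than `k`
vertices leaves a connected graph. -/
def KConnected {V : Type*} (k : ℕ) (G : SimpleGraph V) : Prop :=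
  k < Nat.card V ∧ ∀ S : Finset V, S.card < k → (G.induce ((↑S : Set V)ᶜ)).Connected

/-- `G` has a perfect matching. -/
def Matchable {V : Type*} (G : SimpleGraph V) : Prop :=
  ∃ M : G.Subgraph, M.IsPerfectMatching

/-- `G` is matching covered: connected, of order at least two, and every edge
lies in some perfect matching. -/
def MatchingCovered {V : Type*} (G : SimpleGraph V) : Prop :=
  G.Connected ∧ 2 ≤ Nat.card V ∧
    ∀ e ∈ G.edgeSet, ∃ M : G.Subgraph, M.IsPerfectMatching ∧ e ∈ M.edgeSet

/-- The cut `∂(X)`: edges of `G` with one end in `X` and the other outside `X`. -/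
def cutEdges {V : Type*} (G : SimpleGraph V) (X : Set V) : Set (Sym2 V) :=
  {e | e ∈ G.edgeSet ∧ ∃ u v : V, e = s(u, v) ∧ u ∈ X ∧ v ∉ X}

/-- `A`, `B` form a bipartition of `G`. -/
def IsBipartitionOf {V : Type*} (G : SimpleGraph V) (A B : Set V) : Prop :=
  A ∪ B = Set.univ ∧ Disjoint A B ∧
    ∀ u v : V, G.Adj u v → ((u ∈ A ∧ v ∈ B) ∨ (u ∈ B ∧ v ∈ A))

/-- Number of odd components of `G − B`. -/
noncomputable def coddRemove {V : Type*} (G : SimpleGraph V) (B : Set V) : ℕ :=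
  Nat.card {c : (G.induce Bᶜ).ConnectedComponent // Odd c.supp.ncard}

/-- `B` is a barrier of `G`. -/
def IsBarrier {V : Type*} (G : SimpleGraph V) (B : Set V) : Prop :=
  coddRemove G B = B.ncard

/-- `v` is λ-matchable in `G`: there is a spanning subgraph in which `v` has
degree three and every other vertex has degree one. -/
def IsLambdaMatchable {V : Type*} (G : SimpleGraph V) (v : V) : Prop :=
  ∃ M : G.Subgraph, M.IsSpanning ∧ (M.neighborSet v).ncard = 3 ∧
    ∀ u : V, u ≠ v → (M.neighborSet u).ncard = 1

/-- The pair `(a, b)` is λ-matchable in `G`. -/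
def IsLambdaMatchablePair {V : Type*} (G : SimpleGraph V) (a b : V) : Prop :=
  ∃ M : G.Subgraph, M.IsSpanning ∧ (M.neighborSet a).ncard = 3 ∧ (M.neighborSet b).ncard = 3 ∧
    ∀ u : V, u ≠ a → u ≠ b → (M.neighborSet u).ncard = 1

/-- `G` is a tight cut. -/
def IsTightCut {V : Type*} (G : SimpleGraph V) (X : Set V) : Prop :=
  ∀ M : G.Subgraph, M.IsPerfectMatching → (M.edgeSet ∩ cutEdges G X).ncard = 1

/-- The contraction of `G` obtained by shrinking the complement of `X` to a
single (contraction) vertex, represented by `none`. -/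
def contractOut {V : Type*} (G : SimpleGraph V) (X : Set V) : SimpleGraph (Option ↥X) :=
  SimpleGraph.fromRel fun p q =>
    match p, q with
    | some a, some b => G.Adj a.1 b.1
    | some a, none => ∃ w : V, w ∉ X ∧ G.Adj a.1 w
    | none, _ => False

/-- Neighborhood of a set. -/
def setNbhd {V : Type*} (G : SimpleGraph V) (A' : Set V) : Set V :=
  {v | ∃ a ∈ A', G.Adj a v}

/-- The marked `C`-component on shore `X`, with the marker edge joining `u₁`, `u₂`. -/
def markedComp {V : Type*} (H : SimpleGraph V) (X : Set V) (u₁ u₂ : V) : SimpleGraph ↥X :=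
  SimpleGraph.fromRel fun a b => H.Adj a.1 b.1 ∨ (a.1 = u₁ ∧ b.1 = u₂)

/-!
Let `M` be a spanning subgraph of `G` in which every degree is odd and every vertex of `B` has
degree one; λ-matchings at `v ∈ S` and perfect matchings are examples. By parity each odd
component of `G - B` sends an edge of `M` into `B`; distinct components reach distinct vertices of
`B`, and there are exactly `|B|` odd components, so every edge of `M` between `S` and `B` is the one
chosen for `S`: exactly one edge of `M` leaves `S`. Contracting `V ∖ S` therefore turns a
λ-matching of `G` at `v` into one of the fragment.

Conversely, a λ-matching of the fragment matches the contraction vertex along an edge `aw` of `G`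
with `a ∈ S`. Since `G` is cubic and 3-connected, every nontrivial edge cut has at least three
edges, so for `U` disjoint from `{a, w}` the graph `G - {a, w} - U` has at most `(3|U| + 4) / 3`
odd components, hence at most `|U|` by parity; by Tutte's theorem `aw` lies in a perfect matching
`N`. As `N` leaves `S` only along `aw`, following the fragment's λ-matching inside `S` and `N`
outside gives a λ-matching of `G` at `v`.
-/

section

variable {V : Type*} {G : SimpleGraph V}

namespace SimpleGraph.Subgraph

def outPairs (M : G.Subgraph) (S : Set V) : Set (V × V) :=
  {p | p.1 ∈ S ∧ p.2 ∉ S ∧ M.Adj p.1 p.2}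

theorem eq_of_adj_of_ncard_neighborSet_eq_one {M : G.Subgraph} {v x y : V}
    (h : (M.neighborSet v).ncard = 1) (hx : M.Adj v x) (hy : M.Adj v y) : x = y := by
  obtain ⟨m, hm⟩ := Set.ncard_eq_one.1 h
  have hx' : x ∈ M.neighborSet v := hx
  have hy' : y ∈ M.neighborSet v := hy
  rw [hm] at hx' hy'
  exact hx'.trans hy'.symm

theorem outPairs_nonempty [Finite V] {M : G.Subgraph} {S : Set V} (hS : Odd S.ncard)
    (hodd : ∀ x ∈ S, Odd (M.neighborSet x).ncard) : (M.outPairs S).Nonempty := by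
  classical
  -- otherwise the handshake lemma for `M` restricted to `S` makes `|S|` even
  by_contra h
  have hclosed : ∀ x ∈ S, ∀ y, M.Adj x y → y ∈ S := fun x hx y hxy =>
    by_contra fun hy => h ⟨(x, y), hx, hy, hxy⟩
  have := Fintype.ofFinite V
  set H := M.spanningCoe.induce S
  have hdeg (x : S) : Odd (H.degree x) := by
    have himage : Subtype.val '' H.neighborSet x = M.neighborSet x := by
      ext y
      exact ⟨fun ⟨y', hy', hyy'⟩ => hyy' ▸ hy', fun hy => ⟨⟨y, hclosed x x.2 y hy⟩, hy, rfl⟩⟩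
    rw [← card_neighborSet_eq_degree, ← Nat.card_eq_fintype_card, Nat.card_coe_set_eq,
      ← Set.ncard_image_of_injective _ Subtype.val_injective, himage]
    exact hodd x x.2
  have heven := H.even_card_odd_degree_vertices
  rw [Finset.filter_true_of_mem fun x _ => hdeg x, Finset.card_univ, ← Nat.card_eq_fintype_card,
    Nat.card_coe_set_eq] at heven
  exact Nat.not_even_iff_odd.2 hS heven

theorem IsPerfectMatching.ncard_neighborSet_eq_one {M : G.Subgraph}
    (hM : M.IsPerfectMatching) (v : V) : (M.neighborSet v).ncard = 1 := by
  obtain ⟨w, hw, huniq⟩ := isPerfectMatching_iff.1 hM v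
  exact Set.ncard_eq_one.2 ⟨w, Set.eq_singleton_iff_unique_mem.2 ⟨hw, huniq⟩⟩

end SimpleGraph.Subgraph

namespace SimpleGraph.ConnectedComponent

variable {T : Type*} {H : SimpleGraph T}

theorem mem_image_supp_of_adj (φ : H ↪g G) {c : H.ConnectedComponent} {x y : V}
    (hx : x ∈ φ '' c.supp) (hy : y ∈ Set.range φ) (hxy : G.Adj x y) : y ∈ φ '' c.supp := by
  obtain ⟨s, hs, rfl⟩ := hx
  obtain ⟨t, rfl⟩ := hy
  exact ⟨t, c.mem_supp_of_adj_mem_supp hs (φ.map_adj_iff.1 hxy), rfl⟩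

theorem eq_of_mem_image_supp {s : Set V} {c d : (G.induce s).ConnectedComponent} {x : V}
    (hc : x ∈ Subtype.val '' c.supp) (hd : x ∈ Subtype.val '' d.supp) : c = d := by
  obtain ⟨x, hxc, rfl⟩ := hc
  obtain ⟨x', hxd, hxx'⟩ := hd
  obtain rfl := Subtype.ext hxx'
  exact eq_of_common_vertex hxc hxd

theorem snd_notMem_of_mem_outPairs {s : Set V} {c : (G.induce s).ConnectedComponent}
    {M : G.Subgraph} {q : V × V} (hq : q ∈ M.outPairs (Subtype.val '' c.supp)) : q.2 ∉ s :=
  fun hs => hq.2.1 (mem_image_supp_of_adj (Embedding.induce s) hq.1 ⟨⟨_, hs⟩, rfl⟩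
    (M.adj_sub hq.2.2))

end SimpleGraph.ConnectedComponent

theorem SimpleGraph.exists_connectedComponent_image_supp_eq {s S : Set V} (hSs : S ⊆ s)
    (hconn : (G.induce S).Connected) (hclosed : ∀ x ∈ S, ∀ y, G.Adj x y → y ∈ s → y ∈ S) :
    ∃ c : (G.induce s).ConnectedComponent, Subtype.val '' c.supp = S := by
  obtain ⟨⟨x₀, hx₀⟩⟩ := hconn.nonempty
  refine ⟨(G.induce s).connectedComponentMk ⟨x₀, hSs hx₀⟩, Set.Subset.antisymm ?_ fun y hy => ?_⟩
  · rintro _ ⟨y, hy, rfl⟩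
    obtain ⟨p⟩ := ConnectedComponent.exact hy
    by_contra hyS
    obtain ⟨d, -, hd₁, hd₂⟩ := p.reverse.exists_boundary_dart (Subtype.val ⁻¹' S) hx₀ hyS
    exact hd₂ (hclosed _ hd₁ _ (by simpa using d.adj) d.snd.2)
  · refine ⟨⟨y, hSs hy⟩, ?_, rfl⟩
    rw [ConnectedComponent.mem_supp_iff, ConnectedComponent.eq]
    exact ((hconn.preconnected ⟨x₀, hx₀⟩ ⟨y, hy⟩).map (induceHomOfLE G hSs).toHom).symm

open SimpleGraph.Subgraph SimpleGraph.ConnectedComponent in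
theorem IsBarrier.ncard_outPairs_eq_one [Finite V] {B : Set V} (hB : IsBarrier G B)
    {M : G.Subgraph} (hodd : ∀ x, Odd (M.neighborSet x).ncard)
    (hBdeg : ∀ b ∈ B, (M.neighborSet b).ncard = 1)
    {c : (G.induce Bᶜ).ConnectedComponent} (hc : Odd c.supp.ncard) :
    (M.outPairs (Subtype.val '' c.supp)).ncard = 1 := by
  have hnotMem {d : (G.induce Bᶜ).ConnectedComponent} {q : V × V}
      (hq : q ∈ M.outPairs (Subtype.val '' d.supp)) : q.2 ∈ B :=
    Set.notMem_compl_iff.1 (snd_notMem_of_mem_outPairs hq)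
  -- an edge of `M` into `B` is determined by its end in `B`, which has degree one
  have hsame {d d' : (G.induce Bᶜ).ConnectedComponent} {q q' : V × V}
      (hq : q ∈ M.outPairs (Subtype.val '' d.supp)) (hq' : q' ∈ M.outPairs (Subtype.val '' d'.supp))
      (h : q.2 = q'.2) : q = q' ∧ d = d' := by
    have h1 : q.1 = q'.1 := eq_of_adj_of_ncard_neighborSet_eq_one (hBdeg _ (hnotMem hq))
      (M.adj_symm hq.2.2) (h ▸ M.adj_symm hq'.2.2)
    exact ⟨Prod.ext h1 h, eq_of_mem_image_supp hq.1 (h1 ▸ hq'.1)⟩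
  have hout (d : {d : (G.induce Bᶜ).ConnectedComponent // Odd d.supp.ncard}) :
      (M.outPairs (Subtype.val '' d.1.supp)).Nonempty :=
    outPairs_nonempty (by rw [Set.ncard_image_of_injective _ Subtype.val_injective]; exact d.2)
      fun x _ => hodd x
  choose p hp using hout
  have hφ : Function.Bijective fun d => (⟨(p d).2, hnotMem (hp d)⟩ : B) := by
    refine (Nat.bijective_iff_injective_and_card _).2 ⟨fun d d' h => ?_, ?_⟩
    · exact Subtype.ext (hsame (hp d) (hp d') (congrArg Subtype.val h)).2
    · rw [Nat.card_coe_set_eq]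
      exact hB
  refine Set.ncard_eq_one.2 ⟨p ⟨c, hc⟩,
    Set.eq_singleton_iff_unique_mem.2 ⟨hp ⟨c, hc⟩, fun q hq => ?_⟩⟩
  obtain ⟨d, hd⟩ := hφ.2 ⟨q.2, hnotMem hq⟩
  obtain ⟨hqp, hcd⟩ := hsame hq (hp d) (congrArg Subtype.val hd).symm
  obtain rfl : d = ⟨c, hc⟩ := Subtype.ext hcd.symm
  exact hqp

section Contraction

variable {S : Set V} {x y : V}

open Classical in
noncomputable def contractMap (S : Set V) (y : V) : Option S :=
  if h : y ∈ S then some ⟨y, h⟩ else none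

theorem contractMap_of_mem (h : y ∈ S) : contractMap S y = some ⟨y, h⟩ := dif_pos h

theorem contractMap_of_notMem (h : y ∉ S) : contractMap S y = none := dif_neg h

theorem contractMap_eq_some {x : S} : contractMap S y = some x ↔ y = x := by
  by_cases h : y ∈ S
  · rw [contractMap_of_mem h, Option.some_inj, Subtype.ext_iff]
  · rw [contractMap_of_notMem h]
    exact ⟨nofun, fun hyx => absurd (hyx ▸ x.2) h⟩

theorem contractMap_eq_none : contractMap S y = none ↔ y ∉ S := by
  by_cases h : y ∈ S
  · simp [contractMap_of_mem h, h]
  · simp [contractMap_of_notMem h, h]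

theorem contractOut_adj_some_some {x y : S} :
    (contractOut G S).Adj (some x) (some y) ↔ G.Adj x y := by
  simp only [contractOut, fromRel_adj, ne_eq, Option.some_inj]
  exact ⟨fun ⟨_, h⟩ => h.elim id G.adj_symm,
    fun h => ⟨fun hxy => G.ne_of_adj h (hxy ▸ rfl), .inl h⟩⟩

theorem contractOut_adj_some_none {x : S} :
    (contractOut G S).Adj (some x) none ↔ ∃ w ∉ S, G.Adj x w := by
  simp [contractOut]

theorem contractOut_adj_contractMap (h : G.Adj x y) (hne : contractMap S x ≠ contractMap S y) :
    (contractOut G S).Adj (contractMap S x) (contractMap S y) := by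
  by_cases hx : x ∈ S <;> by_cases hy : y ∈ S
  · simpa [contractMap_of_mem hx, contractMap_of_mem hy, contractOut_adj_some_some] using h
  · rw [contractMap_of_mem hx, contractMap_of_notMem hy, contractOut_adj_some_none]
    exact ⟨y, hy, h⟩
  · rw [contractMap_of_notMem hx, contractMap_of_mem hy, adj_comm, contractOut_adj_some_none]
    exact ⟨x, hx, h.symm⟩
  · exact absurd ((contractMap_of_notMem hx).trans (contractMap_of_notMem hy).symm) hne

end Contraction

namespace SimpleGraph.Subgraph

variable {S : Set V}

noncomputable def contract (M : G.Subgraph) (S : Set V) : (contractOut G S).Subgraph where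
  verts := Set.univ
  Adj p q := p ≠ q ∧ ∃ x y, M.Adj x y ∧ contractMap S x = p ∧ contractMap S y = q
  adj_sub := by
    rintro _ _ ⟨hne, x, y, hxy, rfl, rfl⟩
    exact contractOut_adj_contractMap (M.adj_sub hxy) hne
  edge_vert _ := trivial
  symm := ⟨fun _ _ ⟨hne, x, y, hxy, hx, hy⟩ => ⟨hne.symm, y, x, M.adj_symm hxy, hy, hx⟩⟩

theorem contract_adj {M : G.Subgraph} {p q : Option S} : (M.contract S).Adj p q ↔
    p ≠ q ∧ ∃ x y, M.Adj x y ∧ contractMap S x = p ∧ contractMap S y = q :=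
  Iff.rfl

theorem neighborSet_contract_some (M : G.Subgraph) (x : S) :
    (M.contract S).neighborSet (some x) = contractMap S '' M.neighborSet x := by
  ext q
  rw [mem_neighborSet, contract_adj]
  constructor
  · rintro ⟨-, x', y, hxy, hx', rfl⟩
    obtain rfl := contractMap_eq_some.1 hx'
    exact ⟨y, hxy, rfl⟩
  · rintro ⟨y, hxy, rfl⟩
    refine ⟨fun hq => G.ne_of_adj (M.adj_sub hxy) (contractMap_eq_some.1 hq.symm).symm, x, y, hxy,
      contractMap_of_mem x.2, rfl⟩

theorem neighborSet_contract_none (M : G.Subgraph) :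
    (M.contract S).neighborSet none = (fun p => contractMap S p.1) '' M.outPairs S := by
  ext q
  rw [mem_neighborSet, contract_adj]
  constructor
  · rintro ⟨hq, x, y, hxy, hx, rfl⟩
    have hy : y ∈ S := by_contra fun hy => hq (contractMap_of_notMem hy).symm
    exact ⟨(y, x), ⟨hy, contractMap_eq_none.1 hx, M.adj_symm hxy⟩, rfl⟩
  · rintro ⟨p, ⟨hp₁, hp₂, hp⟩, rfl⟩
    exact ⟨by simp [contractMap_of_mem hp₁], p.2, p.1, M.adj_symm hp,
      contractMap_of_notMem hp₂, rfl⟩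

theorem ncard_neighborSet_contract_some {M : G.Subgraph} (hM : (M.outPairs S).Subsingleton)
    (x : S) : ((M.contract S).neighborSet (some x)).ncard = (M.neighborSet x).ncard := by
  rw [neighborSet_contract_some]
  refine Set.InjOn.ncard_image fun y₁ hy₁ y₂ hy₂ h => ?_
  by_cases hy₁S : y₁ ∈ S
  · rw [contractMap_of_mem hy₁S, eq_comm, contractMap_eq_some] at h
    exact h.symm
  · have hy₂S := contractMap_eq_none.1 (h ▸ contractMap_of_notMem hy₁S)
    exact congrArg Prod.snd (hM (show (x.1, y₁) ∈ M.outPairs S from ⟨x.2, hy₁S, hy₁⟩)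
      (show (x.1, y₂) ∈ M.outPairs S from ⟨x.2, hy₂S, hy₂⟩))

noncomputable def glue (M' : (contractOut G S).Subgraph) (N : G.Subgraph) : G.Subgraph where
  verts := Set.univ
  Adj x y := (x ∈ S ∧ y ∈ S ∧ M'.Adj (contractMap S x) (contractMap S y)) ∨
    ((x ∉ S ∨ y ∉ S) ∧ N.Adj x y)
  adj_sub := by
    rintro x y (⟨hx, hy, hxy⟩ | ⟨-, hxy⟩)
    · rw [contractMap_of_mem hx, contractMap_of_mem hy] at hxy
      exact contractOut_adj_some_some.1 (M'.adj_sub hxy)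
    · exact N.adj_sub hxy
  edge_vert _ := trivial
  symm := ⟨fun _ _ h => h.imp (fun ⟨hx, hy, hxy⟩ => ⟨hy, hx, M'.adj_symm hxy⟩)
    fun ⟨hxy, h⟩ => ⟨hxy.symm, N.adj_symm h⟩⟩

variable {M' : (contractOut G S).Subgraph} {N : G.Subgraph}

theorem glue_adj {x y : V} : (M'.glue N).Adj x y ↔
    (x ∈ S ∧ y ∈ S ∧ M'.Adj (contractMap S x) (contractMap S y)) ∨
      ((x ∉ S ∨ y ∉ S) ∧ N.Adj x y) :=
  Iff.rfl

theorem neighborSet_glue_of_notMem {x : V} (hx : x ∉ S) :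
    (M'.glue N).neighborSet x = N.neighborSet x := by
  ext y
  simp [glue_adj, hx]

theorem outPairs_glue : (M'.glue N).outPairs S = N.outPairs S := by
  ext p
  simp +contextual [outPairs, glue_adj]

theorem neighborSet_contract_glue (h : ∀ x : S, M'.Adj (some x) none ↔ ∃ y ∉ S, N.Adj x y)
    (x : S) : ((M'.glue N).contract S).neighborSet (some x) = M'.neighborSet (some x) := by
  ext (_ | z)
  · simp only [neighborSet_contract_some, mem_neighborSet, h, Set.mem_image, contractMap_eq_none,
      glue_adj, x.2, true_and, not_true_eq_false, false_or]
    exact ⟨fun ⟨y, h, hy⟩ => ⟨y, hy, (h.resolve_left fun h' => hy h'.1).2⟩,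
      fun ⟨y, hy, h⟩ => ⟨y, .inr ⟨hy, h⟩, hy⟩⟩
  · simp [neighborSet_contract_some, contractMap_eq_some, glue_adj, contractMap_of_mem]

end SimpleGraph.Subgraph

open SimpleGraph.Subgraph

theorem isLambdaMatchable_contractOut {S : Set V} {v : S} {M : G.Subgraph}
    (hv : (M.neighborSet v).ncard = 3) (hdeg : ∀ u, u ≠ (v : V) → (M.neighborSet u).ncard = 1)
    (hM : (M.outPairs S).ncard = 1) : IsLambdaMatchable (contractOut G S) (some v) := by
  obtain ⟨p, hp⟩ := Set.ncard_eq_one.1 hM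
  have hsub : (M.outPairs S).Subsingleton := hp ▸ Set.subsingleton_singleton
  refine ⟨M.contract S, fun _ => trivial, (ncard_neighborSet_contract_some hsub v).trans hv, ?_⟩
  rintro (_ | x) hx
  · rw [neighborSet_contract_none, hp, Set.image_singleton, Set.ncard_singleton]
  · rw [ncard_neighborSet_contract_some hsub]
    exact hdeg x fun h => hx (congrArg some (Subtype.ext h))

theorem exists_adj_none_of_ncard_neighborSet_none_eq_one {S : Set V}
    {M' : (contractOut G S).Subgraph} (h : (M'.neighborSet none).ncard = 1) :
    ∃ a : S, ∃ w ∉ S, M'.Adj none (some a) ∧ G.Adj a w := by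
  obtain ⟨q, hq⟩ := Set.ncard_eq_one.1 h
  have hq' : M'.Adj none q := by
    rw [← Subgraph.mem_neighborSet, hq]
    rfl
  cases q with
  | none => exact absurd (M'.adj_sub hq') (contractOut G S).irrefl
  | some a =>
    obtain ⟨w, hw, haw⟩ := contractOut_adj_some_none.1 (M'.adj_sub hq').symm
    exact ⟨a, w, hw, hq', haw⟩

theorem isLambdaMatchable_of_contractOut {S : Set V} {v : S} {M' : (contractOut G S).Subgraph}
    (hv : (M'.neighborSet (some v)).ncard = 3)
    (hdeg : ∀ q, q ≠ some v → (M'.neighborSet q).ncard = 1)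
    {N : G.Subgraph} (hN : N.IsPerfectMatching) (hNS : (N.outPairs S).ncard = 1)
    {a : S} {w : V} (ha : M'.Adj none (some a)) (hw : w ∉ S) (haw : N.Adj a w) :
    IsLambdaMatchable G v := by
  obtain ⟨p, hp⟩ := Set.ncard_eq_one.1 hNS
  have hsub : (N.outPairs S).Subsingleton := hp ▸ Set.subsingleton_singleton
  have hglue (x : S) : M'.Adj (some x) none ↔ ∃ y ∉ S, N.Adj x y := by
    constructor
    · intro hx
      obtain rfl : x = a := Option.some_injective _ (eq_of_adj_of_ncard_neighborSet_eq_one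
        (hdeg none nofun) (M'.adj_symm hx) ha)
      exact ⟨w, hw, haw⟩
    · rintro ⟨y, hy, hxy⟩
      obtain ⟨hxa, -⟩ := Prod.ext_iff.1 (hsub (show (x.1, y) ∈ N.outPairs S from ⟨x.2, hy, hxy⟩)
        (show (a.1, w) ∈ N.outPairs S from ⟨a.2, hw, haw⟩))
      obtain rfl : x = a := Subtype.ext hxa
      exact M'.adj_symm ha
  have hdegS (x : S) : ((M'.glue N).neighborSet x).ncard = (M'.neighborSet (some x)).ncard := by
    rw [← ncard_neighborSet_contract_some (outPairs_glue (N := N) ▸ hsub),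
      neighborSet_contract_glue hglue]
  refine ⟨M'.glue N, fun _ => trivial, (hdegS v).trans hv, fun u hu => ?_⟩
  by_cases huS : u ∈ S
  · rw [hdegS ⟨u, huS⟩]
    exact hdeg _ fun h => hu (congrArg Subtype.val (Option.some_injective _ h))
  · rw [neighborSet_glue_of_notMem huS]
    exact hN.ncard_neighborSet_eq_one u

section Counting

open Finset

theorem SimpleGraph.card_interedges_comm [DecidableRel G.Adj] (s t : Finset V) :
    #(G.interedges s t) = #(G.interedges t s) :=
  have := G.symm
  Rel.card_interedges_comm s t

variable [Fintype V] [DecidableRel G.Adj]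

theorem IsCubic.degree_eq (hcub : IsCubic G) (v : V) : G.degree v = 3 := by
  rw [← card_neighborSet_eq_degree, ← Nat.card_eq_fintype_card, Nat.card_coe_set_eq, hcub v]

theorem IsCubic.even_card (hcub : IsCubic G) : Even (Fintype.card V) := by
  have h := G.even_card_odd_degree_vertices
  rwa [filter_true_of_mem fun v _ => by rw [hcub.degree_eq]; decide, card_univ] at h

variable [DecidableEq V]

theorem SimpleGraph.card_interedges_eq_sum (s t : Finset V) :
    #(G.interedges s t) = ∑ z ∈ s, #(G.neighborFinset z ∩ t) := by
  conv_lhs => rw [← s.biUnion_singleton_eq_self, interedges_biUnion_left]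
  rw [card_biUnion fun z _ z' _ h => G.interedges_disjoint_left (disjoint_singleton.2 h) t]
  refine sum_congr rfl fun z _ => ?_
  have : G.interedges {z} t = (G.neighborFinset z ∩ t).image (Prod.mk z) := by
    ext ⟨x, y⟩
    simp only [mem_interedges_iff]
    aesop
  rw [this, Finset.card_image_of_injective _ (Prod.mk_right_injective z)]

theorem IsCubic.three_le_card_interedges_compl (hcub : IsCubic G) (h3 : KConnected 3 G)
    {C : Finset V} (hC : C.Nonempty) (hCc : Cᶜ.Nonempty) : 3 ≤ #(G.interedges C Cᶜ) := by
  by_contra! hlt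
  set X := (G.interedges C Cᶜ).image Prod.snd
  have hXC (y : V) (hy : y ∈ X) : y ∉ C := by
    obtain ⟨p, hp, rfl⟩ := Finset.mem_image.1 hy
    exact Finset.mem_compl.1 (G.mem_interedges_iff.1 hp).2.1
  by_cases hsmall : Cᶜ ⊆ X
  · -- each vertex outside `C` has at most one neighbour outside `C`
    have hz (z : V) (hz : z ∈ Cᶜ) : 4 - #Cᶜ ≤ #(G.neighborFinset z ∩ C) := by
      have h1 := card_inter_add_card_sdiff (G.neighborFinset z) C
      have h2 : G.neighborFinset z \ C ⊆ Cᶜ.erase z := fun y hy => by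
        rw [Finset.mem_sdiff, mem_neighborFinset] at hy
        exact Finset.mem_erase.2 ⟨(G.ne_of_adj hy.1).symm, Finset.mem_compl.2 hy.2⟩
      have hle := Finset.card_le_card h2
      rw [card_neighborFinset_eq_degree, hcub.degree_eq] at h1
      rw [card_erase_of_mem hz] at hle
      have := card_pos.2 ⟨z, hz⟩
      omega
    have hm : #Cᶜ ≤ 2 := (Finset.card_le_card hsmall).trans (card_image_le.trans (by omega))
    have hsum := card_nsmul_le_sum Cᶜ _ _ hz
    rw [card_interedges_comm, card_interedges_eq_sum] at hlt
    have hm' : 1 ≤ #Cᶜ := hCc.card_pos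
    rw [smul_eq_mul] at hsum
    interval_cases #Cᶜ <;> omega
  · -- a path from `C` to `y` avoiding the outer ends of the cut would still have to cross it
    obtain ⟨y, hyC, hyX⟩ := Finset.not_subset.1 hsmall
    obtain ⟨c, hc⟩ := hC
    have hconn := h3.2 X (card_image_le.trans_lt hlt)
    obtain ⟨p⟩ := hconn.preconnected ⟨c, by simpa using fun h => hXC c h hc⟩ ⟨y, by simpa using hyX⟩
    obtain ⟨d, -, hd₁, hd₂⟩ := p.exists_boundary_dart (Subtype.val ⁻¹' C) hc
      (by simpa using Finset.mem_compl.1 hyC)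
    refine d.snd.2 (Finset.mem_image.2 ⟨(d.fst, d.snd), G.mem_interedges_iff.2 ⟨hd₁, ?_, ?_⟩, rfl⟩)
    · simpa using hd₂
    · simpa using d.adj

theorem IsCubic.card_interedges_compl_add_two_le (hcub : IsCubic G) {D : Finset V} {a w : V}
    (ha : a ∈ D) (hw : w ∈ D) (haw : G.Adj a w) :
    #(G.interedges D Dᶜ) + 2 ≤ 3 * #D := by
  have hsub : G.interedges D Dᶜ ∪ {(a, w), (w, a)} ⊆ G.interedges D univ := by
    refine union_subset (G.interedges_mono subset_rfl (subset_univ _)) fun p hp => ?_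
    rcases Finset.mem_insert.1 hp with rfl | hp
    · exact G.mem_interedges_iff.2 ⟨ha, mem_univ _, haw⟩
    · rw [Finset.mem_singleton.1 hp]
      exact G.mem_interedges_iff.2 ⟨hw, mem_univ _, haw.symm⟩
  have hdisj : Disjoint (G.interedges D Dᶜ) {(a, w), (w, a)} := by
    refine disjoint_left.2 fun p hp hp' => ?_
    have h2 := (G.mem_interedges_iff.1 hp).2.1
    rcases Finset.mem_insert.1 hp' with rfl | hp'
    · exact Finset.mem_compl.1 h2 hw
    · rw [Finset.mem_singleton.1 hp'] at h2
      exact Finset.mem_compl.1 h2 ha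
  have := Finset.card_le_card hsub
  rw [card_union_of_disjoint hdisj, card_pair fun h => G.ne_of_adj haw (Prod.ext_iff.1 h).1,
    card_interedges_eq_sum D univ] at this
  simpa [card_neighborFinset_eq_degree, hcub.degree_eq, mul_comm] using this

theorem IsCubic.three_le_card_interedges_image_supp (hcub : IsCubic G) (h3 : KConnected 3 G)
    {T : Type*} {H : SimpleGraph T} (φ : H ↪g G) {a : V} (ha : a ∉ Set.range φ)
    (c : H.ConnectedComponent) :
    3 ≤ #(G.interedges (Set.toFinite (φ '' c.supp)).toFinset
      (Set.toFinite (Set.range φ)).toFinsetᶜ) := by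
  refine (hcub.three_le_card_interedges_compl h3 (C := (Set.toFinite (φ '' c.supp)).toFinset) ?_
    ⟨a, ?_⟩).trans (card_le_card fun p hp => ?_)
  · simpa using c.nonempty_supp
  · simpa using fun t _ h => ha ⟨t, h⟩
  · simp only [mem_interedges_iff, Finset.mem_compl, Set.Finite.mem_toFinset] at hp ⊢
    exact ⟨hp.1, fun hy => hp.2.1 (ConnectedComponent.mem_image_supp_of_adj φ hp.1 hy hp.2.2),
      hp.2.2⟩

end Counting

open Finset in
theorem IsCubic.three_mul_ncard_oddComponents_add_two_le [Finite V] (hcub : IsCubic G)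
    (h3 : KConnected 3 G) {T : Type*} {H : SimpleGraph T} (φ : H ↪g G) {a w : V}
    (ha : a ∉ Set.range φ) (hw : w ∉ Set.range φ) (haw : G.Adj a w) :
    3 * H.oddComponents.ncard + 2 ≤ 3 * (Nat.card V - Nat.card T) := by
  classical
  have := Fintype.ofFinite V
  have := Finite.of_injective φ φ.injective
  set R := (Set.toFinite (Set.range φ)).toFinset
  set K : H.ConnectedComponent → Finset V := fun c => (Set.toFinite (φ '' c.supp)).toFinset
  set O := (Set.toFinite H.oddComponents).toFinset
  have hdisj : (O : Set H.ConnectedComponent).PairwiseDisjoint fun c => G.interedges (K c) Rᶜ :=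
    fun c _ c' _ hcc' => G.interedges_disjoint_left (Set.Finite.disjoint_toFinset.2
      ((Set.disjoint_image_iff φ.injective).2 (pairwise_disjoint_supp_connectedComponent _ hcc'))) _
  have hsum : 3 * #O + 2 ≤ 3 * #Rᶜ :=
    calc 3 * #O + 2 ≤ ∑ c ∈ O, #(G.interedges (K c) Rᶜ) + 2 := by
          simpa only [smul_eq_mul, mul_comm] using Nat.add_le_add_right (card_nsmul_le_sum O _ 3
            fun c _ => hcub.three_le_card_interedges_image_supp h3 φ ha c) 2
      _ = #(G.interedges (O.biUnion K) Rᶜ) + 2 := by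
          rw [G.interedges_biUnion_left, card_biUnion hdisj]
      _ ≤ #(G.interedges R Rᶜ) + 2 := by
          gcongr
          exact G.interedges_mono (biUnion_subset.2 fun c _ =>
            Set.Finite.toFinset_subset_toFinset.2 (Set.image_subset_range _ _)) subset_rfl
      _ ≤ 3 * #Rᶜ := by
          rw [card_interedges_comm]
          simpa using hcub.card_interedges_compl_add_two_le (D := Rᶜ) (by simpa [R] using ha)
            (by simpa [R] using hw) haw
  rwa [card_compl, ← Set.ncard_eq_toFinset_card (Set.range φ),
    Set.ncard_range_of_injective φ.injective, ← Set.ncard_eq_toFinset_card H.oddComponents,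
    ← Nat.card_eq_fintype_card] at hsum

theorem IsCubic.not_isTutteViolator_induce_compl_pair [Finite V] (hcub : IsCubic G)
    (h3 : KConnected 3 G) {a w : V} (haw : G.Adj a w) (u : Set ({a, w}ᶜ : Set V)) :
    ¬(G.induce {a, w}ᶜ).IsTutteViolator u := by
  classical
  have := Fintype.ofFinite V
  intro hu
  set H := ((⊤ : (G.induce {a, w}ᶜ).Subgraph).deleteVerts u).coe
  let φ : H ↪g G := ⟨⟨fun t => t.1.1, fun t t' h => Subtype.ext (Subtype.ext h)⟩, fun {t t'} => by
    change G.Adj t.1.1 t'.1.1 ↔ H.Adj t t'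
    simp [H, t.2.2, t'.2.2]⟩
  have hbound := hcub.three_mul_ncard_oddComponents_add_two_le h3 φ
    (fun ⟨t, ht⟩ => t.1.2 (.inl ht)) (fun ⟨t, ht⟩ => t.1.2 (.inr ht)) haw
  have hcard : Nat.card ((⊤ : (G.induce {a, w}ᶜ).Subgraph).deleteVerts u).verts + u.ncard + 2 =
      Nat.card V := by
    rw [Subgraph.deleteVerts_verts, Subgraph.verts_top, Nat.card_coe_set_eq,
      Set.ncard_sdiff_add_ncard_of_subset (Set.subset_univ u), Set.ncard_univ, Nat.card_coe_set_eq,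
      ← Set.ncard_pair (G.ne_of_adj haw)]
    exact (add_comm _ _).trans (Set.ncard_add_ncard_compl {a, w})
  -- `3k + 2 ≤ 3|u| + 6` leaves only `k = |u| + 1`, which has the wrong parity
  have hpar := odd_ncard_oddComponents (G := H)
  have heven := hcub.even_card
  change u.ncard < H.oddComponents.ncard at hu
  simp only [Nat.odd_iff] at hpar
  rw [← Nat.card_eq_fintype_card, Nat.even_iff] at heven
  omega

theorem SimpleGraph.Subgraph.IsPerfectMatching.sup_subgraphOfAdj {a w : V} (haw : G.Adj a w)
    {M : (G.induce {a, w}ᶜ).Subgraph} (hM : M.IsPerfectMatching) :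
    (M.map (Embedding.induce {a, w}ᶜ).toHom ⊔ G.subgraphOfAdj haw).IsPerfectMatching := by
  have hmatch := hM.1.map (Embedding.induce {a, w}ᶜ).toHom (Embedding.induce (G := G) _).injective
  have hverts : (M.map (Embedding.induce {a, w}ᶜ).toHom).verts = {a, w}ᶜ := by
    rw [Subgraph.map_verts, hM.2.verts_eq_univ, Set.image_univ]
    exact Subtype.range_coe
  refine ⟨hmatch.sup (.subgraphOfAdj haw) ?_, fun x => ?_⟩
  · rw [hmatch.support_eq_verts, (IsMatching.subgraphOfAdj haw).support_eq_verts, hverts,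
      subgraphOfAdj_verts]
    exact disjoint_compl_left
  · by_cases hx : x ∈ ({a, w}ᶜ : Set V)
    · exact .inl (by rw [hverts]; exact hx)
    · exact .inr (by rw [subgraphOfAdj_verts]; exact Set.notMem_compl_iff.1 hx)

theorem IsCubic.exists_isPerfectMatching_adj [Finite V] (hcub : IsCubic G) (h3 : KConnected 3 G)
    {a w : V} (haw : G.Adj a w) : ∃ N : G.Subgraph, N.IsPerfectMatching ∧ N.Adj a w := by
  obtain ⟨M, hM⟩ := tutte.2 (hcub.not_isTutteViolator_induce_compl_pair h3 haw)
  exact ⟨_, hM.sup_subgraphOfAdj haw, .inr (by simp)⟩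

end

theorem lambdaMatchable_iff_in_barrier_fragment_general {V : Type*} [Fintype V]
    (G : SimpleGraph V) (hcub : IsCubic G) (h3 : KConnected 3 G)
    (B : Set V) (hB : IsBarrier G B)
    (S : Set V) (hSB : S ⊆ Bᶜ) (hSodd : Odd S.ncard)
    (hSconn : (G.induce S).Connected)
    (hScomp : ∀ x ∈ S, ∀ y : V, G.Adj x y → y ∉ B → y ∈ S) :
    ∀ v : ↥S, (IsLambdaMatchable G v.1 ↔ IsLambdaMatchable (contractOut G S) (some v)) := by
  obtain ⟨c, rfl⟩ := exists_connectedComponent_image_supp_eq hSB hSconn hScomp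
  rw [Set.ncard_image_of_injective _ Subtype.val_injective] at hSodd
  intro v
  have hvB : (v : V) ∉ B := hSB v.2
  constructor
  · rintro ⟨M, -, hv, hdeg⟩
    refine isLambdaMatchable_contractOut hv hdeg (hB.ncard_outPairs_eq_one (fun x => ?_)
      (fun b hb => hdeg b (ne_of_mem_of_not_mem hb hvB)) hSodd)
    obtain rfl | hx := eq_or_ne x v
    · exact hv ▸ odd_two_mul_add_one 1
    · exact hdeg x hx ▸ odd_one
  · rintro ⟨M', -, hv, hdeg⟩
    obtain ⟨a, w, hw, ha, haw⟩ := exists_adj_none_of_ncard_neighborSet_none_eq_one (hdeg none nofun)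
    obtain ⟨N, hN, hNaw⟩ := hcub.exists_isPerfectMatching_adj h3 haw
    have hNdeg := hN.ncard_neighborSet_eq_one
    exact isLambdaMatchable_of_contractOut hv hdeg hN
      (hB.ncard_outPairs_eq_one (fun x => hNdeg x ▸ odd_one) (fun b _ => hNdeg b) hSodd) ha hw hNaw

/-- let `B` be a nonempty barrier of a 3-connected cubic graph
`G`, and let `S` be the vertex set of an odd component `J` of `G − B`.  Then a
vertex `v ∈ S` is λ-matchable in `G` iff it is λ-matchable in the barrier
fragment `G/(V∖S)` obtained by contracting the complement of `S` to a single
vertex. -/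
theorem lambdaMatchable_iff_in_barrier_fragment {V : Type*} [Fintype V]
    (G : SimpleGraph V) (hcub : IsCubic G) (h3 : KConnected 3 G)
    (B : Set V) (hB : IsBarrier G B) (hBne : B.Nonempty)
    (S : Set V) (hSB : S ⊆ Bᶜ) (hSodd : Odd S.ncard)
    (hSconn : (G.induce S).Connected)
    (hScomp : ∀ x ∈ S, ∀ y : V, G.Adj x y → y ∉ B → y ∈ S) :
    ∀ v : ↥S, (IsLambdaMatchable G v.1 ↔ IsLambdaMatchable (contractOut G S) (some v)) :=
  lambdaMatchable_iff_in_barrier_fragment_general G hcub h3 B hB S hSB hSodd hSconn hScomp
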